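/- For the space-inhomogeneous half-plane model of the context, the following two functional equations hold in R[[t]]: F_0 = 1 + t·(y + y^{−1} + x)·F_1 + t·ΔF_1, and F_1 = t·(y + y^{−1} + x)·F_0 + t·x·(y + y^{−1})·F_1 + t·ΔF_0 + t·(y + y^{−1})·ΔF_1, where ΔG = (G − G(0,y))/x and G(0,y) denotes the series obtained by setting x = 0 in every t-coefficient of G. -/

import Mathlib

/-!
A point `(i, j)` with `i + j` even is entered only by the four axis steps: its axis neighbours are
odd and use `S₁`, while its diagonal neighbours are even and use `S₀`, which has no diagonal steps.
A point with `i + j` odd is entered by all eight steps. On the coefficient of `t^(n+1) x^i y^j`,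
multiplication by `t`, `y^{±1}` and `x` shifts `n`, `j` and `i`, and `Δ` shifts `i` back, so these
two recurrences are exactly the two functional equations. The neighbour `(i - 1, j)` needs no
special care at `i = 0`: the counts vanish for `i < 0`, and so do the coefficients.
-/

/-- The operator `Δ` on `R[[t]]` defined by `ΔG = (G − G(0,y))/x`,
acting on each `t`-coefficient (a polynomial in `x`) as `divX`. -/
noncomputable def seriesDeltaR {L : Type*} [CommRing L] (G : PowerSeries (Polynomial L)) :
    PowerSeries (Polynomial L) :=
  PowerSeries.mk fun N => (PowerSeries.coeff N G).divX

lemma LaurentPolynomial.one_apply {R : Type*} [Semiring R] (j : ℤ) :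
    (1 : LaurentPolynomial R).coeff j = if j = 0 then 1 else 0 := by
  rw [← map_one LaurentPolynomial.C, LaurentPolynomial.C_apply]

lemma LaurentPolynomial.T_mul_apply {R : Type*} [Semiring R] (k j : ℤ) (q : LaurentPolynomial R) :
    (LaurentPolynomial.T k * q).coeff j = q.coeff (j - k) := by
  rw [LaurentPolynomial.T, AddMonoidAlgebra.coeff_single_mul_apply, one_mul, neg_add_eq_sub]

section TrivariateCoeff

variable {R : Type*} [CommSemiring R]

/-- The coefficient of `t ^ n * x ^ i * y ^ j`, extended by zero to `i < 0` so that
multiplication by `x` is the shift `i ↦ i - 1` for every `i`. -/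
noncomputable def trivariateCoeff (G : PowerSeries (Polynomial (LaurentPolynomial R)))
    (n : ℕ) (i j : ℤ) : R :=
  if 0 ≤ i then ((PowerSeries.coeff n G).coeff i.toNat).coeff j else 0

variable {G H : PowerSeries (Polynomial (LaurentPolynomial R))} {n : ℕ} {i j : ℤ}

@[simp]
lemma trivariateCoeff_natCast (i : ℕ) :
    trivariateCoeff G n i j = ((PowerSeries.coeff n G).coeff i).coeff j := by
  simp [trivariateCoeff]

lemma trivariateCoeff_of_neg (hi : i < 0) : trivariateCoeff G n i j = 0 :=
  if_neg hi.not_ge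

lemma ext_trivariateCoeff
    (h : ∀ n (i : ℕ) j, trivariateCoeff G n i j = trivariateCoeff H n i j) : G = H := by
  ext n i j
  simpa using h n i j

lemma trivariateCoeff_add :
    trivariateCoeff (G + H) n i j = trivariateCoeff G n i j + trivariateCoeff H n i j := by
  unfold trivariateCoeff
  split_ifs <;> simp

lemma trivariateCoeff_one :
    trivariateCoeff (1 : PowerSeries (Polynomial (LaurentPolynomial R))) n i j =
      if n = 0 ∧ i = 0 ∧ j = 0 then 1 else 0 := by
  unfold trivariateCoeff
  rcases n with _ | n
  · by_cases hi : i = 0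
    · simp [hi, LaurentPolynomial.one_apply]
    · rcases lt_or_gt_of_ne hi with hi' | hi'
      · simp [hi, hi'.not_ge]
      · simp [hi, hi'.le, Polynomial.coeff_one, hi'.not_ge]
  · simp [PowerSeries.coeff_one]

lemma trivariateCoeff_X_mul_zero : trivariateCoeff (PowerSeries.X * G) 0 i j = 0 := by
  simp [trivariateCoeff]

lemma trivariateCoeff_X_mul_succ :
    trivariateCoeff (PowerSeries.X * G) (n + 1) i j = trivariateCoeff G n i j := by
  simp [trivariateCoeff, PowerSeries.coeff_succ_X_mul]

lemma trivariateCoeff_T_mul (k : ℤ) :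
    trivariateCoeff (PowerSeries.C (Polynomial.C (LaurentPolynomial.T k)) * G) n i j =
      trivariateCoeff G n i (j - k) := by
  simp only [trivariateCoeff, PowerSeries.coeff_C_mul, Polynomial.coeff_C_mul,
    LaurentPolynomial.T_mul_apply]

lemma trivariateCoeff_x_mul :
    trivariateCoeff (PowerSeries.C Polynomial.X * G) n i j = trivariateCoeff G n (i - 1) j := by
  unfold trivariateCoeff
  rw [PowerSeries.coeff_C_mul]
  rcases lt_or_ge i 1 with hi | hi
  · rw [if_neg (by omega : ¬ 0 ≤ i - 1)]
    split_ifs with h0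
    · obtain rfl : i = 0 := by omega
      simp
    · rfl
  · obtain ⟨k, rfl⟩ : ∃ k : ℕ, i = k + 1 := ⟨(i - 1).toNat, by omega⟩
    rw [if_pos (by omega), if_pos (by omega)]
    simp [Int.toNat_natCast_add_one]

lemma trivariateCoeff_seriesDeltaR {R : Type*} [CommRing R]
    {G : PowerSeries (Polynomial (LaurentPolynomial R))} (i : ℕ) :
    trivariateCoeff (seriesDeltaR G) n i j = trivariateCoeff G n (i + 1) j := by
  rw [← Nat.cast_succ, trivariateCoeff_natCast, trivariateCoeff_natCast]
  simp [seriesDeltaR]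

end TrivariateCoeff

section Walks

def squareSteps : Finset (ℤ × ℤ) := {(1,0), (-1,0), (0,1), (0,-1)}

def kingSteps : Finset (ℤ × ℤ) :=
  {(1,0), (-1,0), (0,1), (0,-1), (1,1), (1,-1), (-1,1), (-1,-1)}

/-- The step set used from a point `(i, j)` with `i + j = p`. -/
def stepsFrom (p : ℤ) : Finset (ℤ × ℤ) := if p % 2 = 0 then squareSteps else kingSteps

variable {M : Type*} [AddCommMonoid M] {f : ℤ → ℤ → ℕ → M} {i j : ℤ} {n : ℕ}

structure HalfPlaneRecurrence (f : ℤ → ℤ → ℕ → M) : Prop where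
  of_neg : ∀ i j n, i < 0 → f i j n = 0
  succ : ∀ (i j : ℤ) (n : ℕ), 0 ≤ i →
    f i j (n + 1) = ∑ st ∈ kingSteps,
      if 0 ≤ i - st.1 ∧ st ∈ stepsFrom (i - st.1 + (j - st.2))
        then f (i - st.1) (j - st.2) n else 0

namespace HalfPlaneRecurrence

lemma succ_eq_sum (hf : HalfPlaneRecurrence f) (hi : 0 ≤ i) :
    f i j (n + 1) = ∑ st ∈ kingSteps,
      if st ∈ stepsFrom (i + j - st.1 - st.2) then f (i - st.1) (j - st.2) n else 0 := by
  rw [hf.succ i j n hi]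
  refine Finset.sum_congr rfl fun st _ => ?_
  by_cases hst : 0 ≤ i - st.1
  · simp only [hst, true_and, show i - st.1 + (j - st.2) = i + j - st.1 - st.2 by ring]
  · simp [hf.of_neg _ _ _ (not_le.mp hst)]

lemma succ_of_even (hf : HalfPlaneRecurrence f) (hi : 0 ≤ i) (hij : (i + j) % 2 = 0) :
    f i j (n + 1) = f (i - 1) j n + f (i + 1) j n + f i (j - 1) n + f i (j + 1) n := by
  rw [hf.succ_eq_sum hi]
  simp [kingSteps, stepsFrom, squareSteps, Finset.sum_insert, Int.sub_emod, hij, add_assoc]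

lemma succ_of_odd (hf : HalfPlaneRecurrence f) (hi : 0 ≤ i) (hij : (i + j) % 2 = 1) :
    f i j (n + 1) = f (i - 1) j n + f (i + 1) j n + f i (j - 1) n + f i (j + 1) n
      + f (i - 1) (j - 1) n + f (i - 1) (j + 1) n + f (i + 1) (j - 1) n
      + f (i + 1) (j + 1) n := by
  rw [hf.succ_eq_sum hi]
  simp [kingSteps, stepsFrom, squareSteps, Finset.sum_insert, Int.sub_emod, hij, add_assoc]

end HalfPlaneRecurrence

/-- The coefficients of `F_r`. -/
def parityPart (f : ℤ → ℤ → ℕ → M) (r i j : ℤ) (n : ℕ) : M :=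
  if (i + j) % 2 = r then f i j n else 0

lemma HalfPlaneRecurrence.parityPart_zero_succ (hf : HalfPlaneRecurrence f) (hi : 0 ≤ i) :
    parityPart f 0 i j (n + 1) = parityPart f 1 (i - 1) j n + parityPart f 1 (i + 1) j n
      + parityPart f 1 i (j - 1) n + parityPart f 1 i (j + 1) n := by
  rcases Int.emod_two_eq (i + j) with h | h
  · simp (disch := omega) only [parityPart, if_pos]
    exact hf.succ_of_even hi h
  · simp (disch := omega) only [parityPart, if_neg, add_zero]

lemma HalfPlaneRecurrence.parityPart_one_succ (hf : HalfPlaneRecurrence f) (hi : 0 ≤ i) :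
    parityPart f 1 i j (n + 1) = parityPart f 0 (i - 1) j n + parityPart f 0 (i + 1) j n
      + parityPart f 0 i (j - 1) n + parityPart f 0 i (j + 1) n
      + parityPart f 1 (i - 1) (j - 1) n + parityPart f 1 (i - 1) (j + 1) n
      + parityPart f 1 (i + 1) (j - 1) n + parityPart f 1 (i + 1) (j + 1) n := by
  rcases Int.emod_two_eq (i + j) with h | h
  · simp (disch := omega) only [parityPart, if_neg, add_zero]
  · simp (disch := omega) only [parityPart, if_pos]
    exact hf.succ_of_odd hi h

lemma parityPart_zero_zero {R : Type*} [AddCommMonoidWithOne R] {f : ℤ → ℤ → ℕ → R}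
    (hf0 : ∀ i j : ℤ, 0 ≤ i → f i j 0 = if i = 0 ∧ j = 0 then 1 else 0) (hi : 0 ≤ i) :
    parityPart f 0 i j 0 = if i = 0 ∧ j = 0 then 1 else 0 := by
  unfold parityPart
  rw [hf0 i j hi]
  split_ifs <;> first | rfl | omega

lemma parityPart_one_zero {R : Type*} [AddCommMonoidWithOne R] {f : ℤ → ℤ → ℕ → R}
    (hf0 : ∀ i j : ℤ, 0 ≤ i → f i j 0 = if i = 0 ∧ j = 0 then 1 else 0) (hi : 0 ≤ i) :
    parityPart f 1 i j 0 = 0 := by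
  unfold parityPart
  rw [hf0 i j hi]
  split_ifs <;> first | rfl | omega

end Walks

lemma trivariateCoeff_eq_parityPart {R : Type*} [CommSemiring R] {f : ℤ → ℤ → ℕ → R}
    (hfneg : ∀ i j n, i < 0 → f i j n = 0)
    {G : PowerSeries (Polynomial (LaurentPolynomial R))} {r : ℤ}
    (hG : ∀ (n i : ℕ) (j : ℤ),
      ((PowerSeries.coeff n G).coeff i).coeff j = if ((i : ℤ) + j) % 2 = r then f i j n else 0)
    (n : ℕ) (i j : ℤ) :
    trivariateCoeff G n i j = parityPart f r i j n := by
  rcases lt_or_ge i 0 with hi | hi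
  · simp [trivariateCoeff_of_neg hi, parityPart, hfneg i j n hi]
  · lift i to ℕ using hi
    simp [hG, parityPart]

section FunctionalEquations

variable {R : Type*} [CommRing R] {f : ℤ → ℤ → ℕ → R}
  {F₀ F₁ : PowerSeries (Polynomial (LaurentPolynomial R))}

lemma functional_equation_even (hf : HalfPlaneRecurrence f)
    (hf0 : ∀ i j : ℤ, 0 ≤ i → f i j 0 = if i = 0 ∧ j = 0 then 1 else 0)
    (hF₀ : ∀ n i j, trivariateCoeff F₀ n i j = parityPart f 0 i j n)
    (hF₁ : ∀ n i j, trivariateCoeff F₁ n i j = parityPart f 1 i j n) :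
    F₀ = 1 + PowerSeries.X * (PowerSeries.C (Polynomial.C (LaurentPolynomial.T 1))
      + PowerSeries.C (Polynomial.C (LaurentPolynomial.T (-1))) + PowerSeries.C Polynomial.X) * F₁
      + PowerSeries.X * seriesDeltaR F₁ := by
  refine ext_trivariateCoeff fun n i j => ?_
  rcases n with _ | n
  · simp only [mul_assoc, trivariateCoeff_add, trivariateCoeff_X_mul_zero, trivariateCoeff_one,
      hF₀, parityPart_zero_zero hf0 (Nat.cast_nonneg i), true_and, add_zero]
  · simp only [mul_assoc, add_mul, trivariateCoeff_add, trivariateCoeff_X_mul_succ,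
      trivariateCoeff_T_mul, trivariateCoeff_x_mul, trivariateCoeff_seriesDeltaR,
      trivariateCoeff_one, hF₀, hF₁, hf.parityPart_zero_succ (Nat.cast_nonneg i),
      Nat.succ_ne_zero, false_and, if_false, zero_add, sub_neg_eq_add]
    ring

lemma functional_equation_odd (hf : HalfPlaneRecurrence f)
    (hf0 : ∀ i j : ℤ, 0 ≤ i → f i j 0 = if i = 0 ∧ j = 0 then 1 else 0)
    (hF₀ : ∀ n i j, trivariateCoeff F₀ n i j = parityPart f 0 i j n)
    (hF₁ : ∀ n i j, trivariateCoeff F₁ n i j = parityPart f 1 i j n) :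
    F₁ = PowerSeries.X * (PowerSeries.C (Polynomial.C (LaurentPolynomial.T 1))
        + PowerSeries.C (Polynomial.C (LaurentPolynomial.T (-1))) + PowerSeries.C Polynomial.X) * F₀
      + PowerSeries.X * PowerSeries.C Polynomial.X
        * (PowerSeries.C (Polynomial.C (LaurentPolynomial.T 1))
          + PowerSeries.C (Polynomial.C (LaurentPolynomial.T (-1)))) * F₁
      + PowerSeries.X * seriesDeltaR F₀
      + PowerSeries.X * (PowerSeries.C (Polynomial.C (LaurentPolynomial.T 1))
        + PowerSeries.C (Polynomial.C (LaurentPolynomial.T (-1)))) * seriesDeltaR F₁ := by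
  refine ext_trivariateCoeff fun n i j => ?_
  rcases n with _ | n
  · simp only [mul_assoc, trivariateCoeff_add, trivariateCoeff_X_mul_zero, hF₁,
      parityPart_one_zero hf0 (Nat.cast_nonneg i), add_zero]
  · simp only [mul_assoc, add_mul, mul_add, trivariateCoeff_add, trivariateCoeff_X_mul_succ,
      trivariateCoeff_T_mul, trivariateCoeff_x_mul, trivariateCoeff_seriesDeltaR, hF₀, hF₁,
      hf.parityPart_one_succ (Nat.cast_nonneg i), sub_neg_eq_add]
    ring

end FunctionalEquations

theorem halfplane_space_inhomogeneous_functional_equations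
    (S0 : Finset (ℤ × ℤ)) (hS0 : S0 = {(1,0), (-1,0), (0,1), (0,-1)})
    (S1 : Finset (ℤ × ℤ))
    (hS1 : S1 = {(1,0), (-1,0), (0,1), (0,-1), (1,1), (1,-1), (-1,1), (-1,-1)})
    (f : ℤ → ℤ → ℕ → ℚ)
    (hfneg : ∀ i j n, i < 0 → f i j n = 0)
    (hf0 : ∀ i j : ℤ, 0 ≤ i → f i j 0 = if i = 0 ∧ j = 0 then 1 else 0)
    (hfrec : ∀ (i j : ℤ) (n : ℕ), 0 ≤ i →
      f i j (n + 1) = ∑ st ∈ S1,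
        if 0 ≤ i - st.1 ∧ st ∈ (if (i - st.1 + (j - st.2)) % 2 = 0 then S0 else S1)
          then f (i - st.1) (j - st.2) n else 0)
    (FF : Fin 2 → PowerSeries (Polynomial (LaurentPolynomial ℚ)))
    (hFF : ∀ (r : Fin 2) (n : ℕ) (i : ℕ) (j : ℤ),
      AddMonoidAlgebra.coeff ((PowerSeries.coeff n (FF r)).coeff i) j =
        if ((i : ℤ) + j) % 2 = ((r : ℕ) : ℤ) then f i j n else 0)
    -- abbreviations: x, y, y⁻¹, t as elements of R[[t]]
    (x y yinv t : PowerSeries (Polynomial (LaurentPolynomial ℚ)))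
    (hx : x = PowerSeries.C Polynomial.X)
    (hy : y = PowerSeries.C (Polynomial.C (LaurentPolynomial.T 1)))
    (hyinv : yinv = PowerSeries.C (Polynomial.C (LaurentPolynomial.T (-1))))
    (ht : t = PowerSeries.X) :
    FF 0 = 1 + t * (y + yinv + x) * FF 1 + t * seriesDeltaR (FF 1) ∧
    FF 1 = t * (y + yinv + x) * FF 0 + t * x * (y + yinv) * FF 1
            + t * seriesDeltaR (FF 0) + t * (y + yinv) * seriesDeltaR (FF 1) := by
  subst hS0 hS1 hx hy hyinv ht
  have hf : HalfPlaneRecurrence f := ⟨hfneg, hfrec⟩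
  have hF₀ := trivariateCoeff_eq_parityPart hfneg (hFF 0)
  have hF₁ := trivariateCoeff_eq_parityPart hfneg (hFF 1)
  exact ⟨functional_equation_even hf hf0 hF₀ hF₁, functional_equation_odd hf hf0 hF₀ hF₁⟩
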